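/- Let G be a k-regular mixed graph on n vertices equipped with an η-function, with time evolution matrix U_θ. If G is periodic (i.e., U_θ^τ = I for some positive integer τ), then k divides 2n, i.e., 2n/k ∈ ℤ. -/

import Mathlib

/-- The reverse of an arc. -/
def arcRev {α : Type*} (a : α × α) : α × α := (a.2, a.1)

/-- The set of symmetric arcs 𝒜⁺ = 𝒜 ∪ 𝒜⁻¹ of a mixed graph given by its arc set. -/
def symArcs {n : ℕ} (A : Finset (Fin n × Fin n)) : Finset (Fin n × Fin n) :=
  A ∪ A.image arcRev

/-- The degree of a vertex in the underlying graph of a mixed graph. -/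
def mixedDeg {n : ℕ} (A : Finset (Fin n × Fin n)) (x : Fin n) : ℕ :=
  ((symArcs A).filter (fun a => a.1 = x)).card

/-- The η-function θ of a mixed graph: η on 𝒜 \ 𝒜⁻¹, -η on 𝒜⁻¹ \ 𝒜, 0 on 𝒜 ∩ 𝒜⁻¹. -/
def etaFun {n : ℕ} (A : Finset (Fin n × Fin n)) (η : ℝ) (a : Fin n × Fin n) : ℝ :=
  if a ∈ A then (if arcRev a ∈ A then 0 else η) else -η

/-- The time evolution matrix U_θ of a mixed graph equipped with an η-function,
given entrywise by (U_θ)_{a,b} = e^{-iθ(a)} (2/deg t(b) · δ_{o(a),t(b)} - δ_{a,b⁻¹}). -/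
noncomputable def timeEvo {n : ℕ} (A : Finset (Fin n × Fin n)) (η : ℝ) :
    Matrix {a // a ∈ symArcs A} {a // a ∈ symArcs A} ℂ :=
  fun a b => Complex.exp (-(etaFun A η a.1) * Complex.I) *
    ((2 / (mixedDeg A b.1.2 : ℂ)) * (if a.1.1 = b.1.2 then 1 else 0) -
      (if a.1 = arcRev b.1 then 1 else 0))

/-!
The eigenvalues of a periodic `U = timeEvo A η` are roots of unity, hence algebraic integers, and
so is their second elementary symmetric function `w = ((tr U)² - tr U²) / 2`. Without loops
`tr U = 0`, and the only closed walk of length two from an arc `a` is `a → a⁻¹ → a`, which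
gives `tr U² = 2m (2/k - 1)²` with `2m = nk` arcs. Hence `2n/k = 2n - m - w` is a rational
algebraic integer, i.e. an integer.
-/

open Matrix Polynomial

theorem Multiset.exists_mem_sq_sum_eq {R : Type*} [CommSemiring R] (S : Subsemiring R)
    (s : Multiset R) (hs : ∀ x ∈ s, x ∈ S) :
    ∃ w ∈ S, s.sum ^ 2 = (s.map (· ^ 2)).sum + 2 * w := by
  induction s using Multiset.induction_on with
  | empty => exact ⟨0, S.zero_mem, by simp⟩
  | cons a s ih =>
    have hs' : ∀ x ∈ s, x ∈ S := fun x hx => hs x (Multiset.mem_cons_of_mem hx)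
    obtain ⟨w, hwS, hw⟩ := ih hs'
    have ha := hs a (Multiset.mem_cons_self a s)
    refine ⟨w + a * s.sum, S.add_mem hwS (S.mul_mem ha (S.multiset_sum_mem s hs')), ?_⟩
    rw [Multiset.sum_cons, Multiset.map_cons, Multiset.sum_cons, add_sq, hw]
    ring

theorem Nat.dvd_of_isIntegral_div {K : Type*} [Field K] [CharZero K] {a b : ℕ} (hb : b ≠ 0)
    (h : IsIntegral ℤ ((a : K) / b)) : b ∣ a := by
  have hq : IsIntegral ℤ (a / b : ℚ) := by
    rw [← isIntegral_algebraMap_iff (algebraMap ℚ K).injective]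
    simpa using h
  obtain ⟨m, hm⟩ := IsIntegrallyClosed.isIntegral_iff.mp hq
  have hab : (a : ℤ) = m * b := by
    rw [algebraMap_int_eq, eq_intCast, eq_div_iff (by exact_mod_cast hb)] at hm
    exact_mod_cast hm.symm
  exact Int.natCast_dvd_natCast.mp ⟨m, by rw [hab, mul_comm]⟩

namespace Matrix

variable {n K : Type*} [Fintype n] [DecidableEq n] [Field K]

theorem pow_eq_one_of_mem_roots_charpoly {M : Matrix n n K} {τ : ℕ} (hM : M ^ τ = 1)
    {z : K} (hz : z ∈ M.charpoly.roots) : z ^ τ = 1 := by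
  have : Nonempty n := by
    by_contra h
    rw [not_nonempty_iff] at h
    simp at hz
  have hspec : z ^ τ ∈ spectrum K (M ^ τ) := spectrum.pow_image_subset M τ
    ⟨z, mem_spectrum_of_isRoot_charpoly (isRoot_of_mem_roots hz), rfl⟩
  rwa [hM, spectrum.one_eq] at hspec

theorem det_scalar_add (M : Matrix n n K) (x : K) :
    (scalar n x + M).det = (-1) ^ Fintype.card n * M.charpoly.eval (-x) := by
  rw [eval_charpoly, ← det_smul]
  congr 1
  ext i j
  by_cases h : i = j <;> simp [h, add_comm]

theorem roots_charpoly_sq [IsAlgClosed K] (M : Matrix n n K) :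
    (M ^ 2).charpoly.roots = M.charpoly.roots.map (· ^ 2) := by
  have hsplits : M.charpoly.Splits := IsAlgClosed.splits M.charpoly
  have hcard : M.charpoly.roots.card = Fintype.card n := by
    rw [← charpoly_natDegree_eq_dim M, splits_iff_card_roots.mp hsplits]
  have heval (x : K) : M.charpoly.eval x = (M.charpoly.roots.map (x - ·)).prod := by
    rw [hsplits.eq_prod_roots_of_monic M.charpoly_monic, eval_multiset_prod, Multiset.map_map]
    simp
  have hneg (x : K) : (-1) ^ M.charpoly.roots.card * (M.charpoly.roots.map (-x - ·)).prod =
      (M.charpoly.roots.map (x + ·)).prod := by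
    rw [← Multiset.card_map (-x - ·), ← Multiset.prod_map_neg, Multiset.map_map]
    congr 1
    exact Multiset.map_congr rfl fun z _ => by simp; ring
  suffices (M ^ 2).charpoly = (M.charpoly.roots.map fun z => X - C (z ^ 2)).prod by
    rw [this, show (fun z : K => X - C (z ^ 2)) = (fun a => X - C a) ∘ (· ^ 2) from rfl,
      ← Multiset.map_map, roots_multiset_prod_X_sub_C]
  -- every `y` is a square `x ^ 2`, and `x ^ 2 - M ^ 2 = (x - M) * (x + M)`
  refine Polynomial.funext fun y => ?_
  obtain ⟨x, rfl⟩ := IsAlgClosed.exists_pow_nat_eq y two_pos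
  have hfac : scalar n (x ^ 2) - M ^ 2 = (scalar n x - M) * (scalar n x + M) := by
    simp only [sub_mul, mul_add, ← sq, (scalar_commute x (Commute.all x) M).eq, map_pow]
    abel
  rw [eval_charpoly, hfac, det_mul, ← eval_charpoly, det_scalar_add, heval, heval, ← hcard,
    hneg, ← Multiset.prod_map_mul, eval_multiset_prod, Multiset.map_map]
  congr 1
  refine Multiset.map_congr rfl fun z _ => ?_
  simp only [Function.comp_apply, eval_sub, eval_X, eval_C]
  ring

theorem exists_isIntegral_sq_trace_eq [IsAlgClosed K] {M : Matrix n n K} {τ : ℕ} (hτ : 0 < τ)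
    (hM : M ^ τ = 1) : ∃ w : K, IsIntegral ℤ w ∧ M.trace ^ 2 = (M ^ 2).trace + 2 * w := by
  have hint : ∀ z ∈ M.charpoly.roots, z ∈ (integralClosure ℤ K).toSubsemiring := fun z hz =>
    IsIntegral.of_pow hτ (by rw [pow_eq_one_of_mem_roots_charpoly hM hz]; exact isIntegral_one)
  obtain ⟨w, hw, h⟩ := M.charpoly.roots.exists_mem_sq_sum_eq _ hint
  refine ⟨w, hw, ?_⟩
  rwa [trace_eq_sum_roots_charpoly, trace_eq_sum_roots_charpoly, roots_charpoly_sq]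

end Matrix

section MixedGraph

variable {n : ℕ} {A : Finset (Fin n × Fin n)}

@[simp]
theorem arcRev_arcRev {α : Type*} (a : α × α) : arcRev (arcRev a) = a := rfl

@[simp]
theorem arcRev_fst {α : Type*} (a : α × α) : (arcRev a).1 = a.2 := rfl

@[simp]
theorem arcRev_snd {α : Type*} (a : α × α) : (arcRev a).2 = a.1 := rfl

theorem mem_symArcs {a : Fin n × Fin n} : a ∈ symArcs A ↔ a ∈ A ∨ arcRev a ∈ A := by
  simp only [symArcs, Finset.mem_union, Finset.mem_image]
  constructor
  · rintro (h | ⟨b, hb, rfl⟩)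
    · exact Or.inl h
    · exact Or.inr hb
  · rintro (h | h)
    · exact Or.inl h
    · exact Or.inr ⟨arcRev a, h, rfl⟩

theorem arcRev_mem_symArcs {a : Fin n × Fin n} (h : a ∈ symArcs A) : arcRev a ∈ symArcs A := by
  rw [mem_symArcs, arcRev_arcRev] at *
  exact h.symm

theorem fst_ne_snd_of_mem_symArcs (hirr : ∀ x, (x, x) ∉ A) {a : Fin n × Fin n}
    (h : a ∈ symArcs A) : a.1 ≠ a.2 := by
  obtain ⟨x, y⟩ := a
  rintro (rfl : x = y)
  rw [mem_symArcs, arcRev, or_self] at h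
  exact hirr x h

theorem arcRev_ne_self_of_mem_symArcs (hirr : ∀ x, (x, x) ∉ A) {a : Fin n × Fin n}
    (h : a ∈ symArcs A) : a ≠ arcRev a :=
  fun he => fst_ne_snd_of_mem_symArcs hirr h (congrArg Prod.fst he)

theorem etaFun_add_etaFun_arcRev (η : ℝ) {a : Fin n × Fin n} (h : a ∈ symArcs A) :
    etaFun A η a + etaFun A η (arcRev a) = 0 := by
  rw [mem_symArcs] at h
  by_cases h1 : a ∈ A <;> by_cases h2 : arcRev a ∈ A <;> simp_all [etaFun]

def symArcRev (a : symArcs A) : symArcs A := ⟨arcRev a.1, arcRev_mem_symArcs a.2⟩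

theorem symArcRev_involutive : Function.Involutive (symArcRev (A := A)) := fun _ => rfl

theorem card_symArcs_eq_sum_mixedDeg : (symArcs A).card = ∑ x, mixedDeg A x :=
  Finset.card_eq_sum_card_fiberwise fun a _ => Finset.mem_univ a.1

theorem even_card_symArcs (hirr : ∀ x, (x, x) ∉ A) : Even (symArcs A).card := by
  set σ := (symArcRev_involutive (A := A)).toPerm
  have hσ := Equiv.Perm.card_compl_support_modEq (p := 2) (n := 1) (σ := σ)
    (Equiv.ext fun a => symArcRev_involutive a)
  have hsupp : σ.support = Finset.univ := by
    refine Finset.eq_univ_of_forall fun a => Equiv.Perm.mem_support.mpr fun h => ?_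
    exact arcRev_ne_self_of_mem_symArcs hirr a.2 (congrArg Subtype.val h).symm
  rw [hsupp, Finset.compl_univ, Finset.card_empty, Fintype.card_coe] at hσ
  exact Nat.even_iff.mpr hσ.symm

theorem trace_timeEvo (hirr : ∀ x, (x, x) ∉ A) (η : ℝ) : (timeEvo A η).trace = 0 :=
  Finset.sum_eq_zero fun a _ => by
    simp [timeEvo, fst_ne_snd_of_mem_symArcs hirr a.2, arcRev_ne_self_of_mem_symArcs hirr a.2]

theorem timeEvo_sq_apply_self (η : ℝ) (a : symArcs A) :
    (timeEvo A η ^ 2) a a = (2 / mixedDeg A a.1.1 - 1) * (2 / mixedDeg A a.1.2 - 1) := by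
  rw [sq, Matrix.mul_apply, Finset.sum_eq_single (symArcRev a)]
  · have hexp : Complex.exp (-(etaFun A η a.1) * Complex.I) *
        Complex.exp (-(etaFun A η (arcRev a.1)) * Complex.I) = 1 := by
      rw [← Complex.exp_add, ← add_mul, ← neg_add, ← Complex.ofReal_add,
        etaFun_add_etaFun_arcRev η a.2]
      simp
    simp only [timeEvo, symArcRev, arcRev_arcRev, arcRev_fst, arcRev_snd, if_true]
    linear_combination (2 / (mixedDeg A a.1.1 : ℂ) - 1) * (2 / (mixedDeg A a.1.2 : ℂ) - 1) * hexp
  · intro b _ hb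
    have hb₁ : b.1 ≠ arcRev a.1 := fun h => hb (Subtype.ext h)
    have hb₂ : a.1 ≠ arcRev b.1 := fun h => hb₁ (by rw [h, arcRev_arcRev])
    by_cases h₁ : a.1.1 = b.1.2
    · have h₂ : b.1.1 ≠ a.1.2 := fun h => hb₁ (Prod.ext h h₁.symm)
      simp [timeEvo, hb₁, hb₂, h₂]
    · simp [timeEvo, hb₂, h₁]
  · simp

theorem trace_timeEvo_sq_of_regular {k : ℕ} (hreg : ∀ x, mixedDeg A x = k) (η : ℝ) :
    (timeEvo A η ^ 2).trace = (symArcs A).card * (2 / k - 1) ^ 2 := by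
  simp only [Matrix.trace, Matrix.diag, timeEvo_sq_apply_self, hreg, Finset.sum_const,
    Finset.card_univ, Fintype.card_coe, nsmul_eq_mul]
  ring

end MixedGraph

/-- a periodic k-regular mixed graph on n vertices satisfies k ∣ 2n. -/
theorem regular_periodic_dvd (n k : ℕ) (hk : 1 ≤ k)
    (A : Finset (Fin n × Fin n)) (hirr : ∀ x : Fin n, (x, x) ∉ A) (η : ℝ)
    (hreg : ∀ x : Fin n, mixedDeg A x = k)
    (hper : ∃ τ : ℕ, 0 < τ ∧ timeEvo A η ^ τ = 1) :
    k ∣ 2 * n := by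
  obtain ⟨τ, hτ, hU⟩ := hper
  obtain ⟨w, hw, hsq⟩ := exists_isIntegral_sq_trace_eq hτ hU
  rw [trace_timeEvo hirr, trace_timeEvo_sq_of_regular hreg] at hsq
  obtain ⟨c, hc⟩ := even_card_symArcs hirr
  have hnk : (c + c : ℂ) = n * k := by
    rw [card_symArcs_eq_sum_mixedDeg] at hc
    exact_mod_cast hc.symm.trans (by simp [hreg])
  rw [hc, Nat.cast_add] at hsq
  have hk0 : (k : ℂ) ≠ 0 := by exact_mod_cast (by omega : k ≠ 0)
  -- `hsq` reads `0 = 2c (2/k - 1)² + 2w` with `2c = nk`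
  have h2n : (2 * n : ℂ) / k = 2 * n - c - w := by
    rw [div_eq_mul_inv]
    linear_combination (-1 / 2 : ℂ) * hsq + (2 * n - 2 * n * (k : ℂ)⁻¹) * mul_inv_cancel₀ hk0 +
      (2 * (k : ℂ)⁻¹ - 2 * (k : ℂ)⁻¹ ^ 2) * hnk
  refine Nat.dvd_of_isIntegral_div (K := ℂ) (by omega) ?_
  rw [Nat.cast_mul, Nat.cast_ofNat, h2n]
  exact (((isIntegral_natCast 2).mul (isIntegral_natCast n)).sub (isIntegral_natCast c)).sub hw
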